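/- Let F be the finite field with 2^n elements, g : F → F_2, and c ∈ F. For every u ∈ F, V_g^c(u) · conj(V_g^c(u)) = Σ_{z ∈ F} (−1)^{Tr(uz) + σ(c,z)} · i^{Tr(cz)} · ( Σ_{x ∈ F} (−1)^{g(x) + g(x+z) + Tr(c²xz)} ). -/

import Mathlib

/-!
Expand the product and put `y = x + z`. The factors `i^{Tr(c(x+z))}` and `conj i^{Tr(cx)}`
combine to `(-1)^{Tr(cx) Tr(cz)} i^{Tr(cz)}`, and the `σ`-factors combine through the
polarization identity `σ(c,x+z) + σ(c,x) + σ(c,z) = Tr(cx) Tr(cz) + Tr(c²xz)`: writing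
`a_i = (cx)^{2^i}`, `σ` is the second elementary symmetric function of the conjugates `a_i` and
the trace is their sum, and `σ ∈ F_2` because squaring permutes the conjugates cyclically.
-/

open Finset

noncomputable section

noncomputable instance (n : ℕ) : Fintype (GaloisField 2 n) := Fintype.ofFinite _

/-- The absolute trace `Tr : F → F_2` for `F = GaloisField 2 n`. -/
def Tr (n : ℕ) (z : GaloisField 2 n) : ZMod 2 :=
  Algebra.trace (ZMod 2) (GaloisField 2 n) z

/-- `σ(c,x) = Σ_{0 ≤ i < j ≤ n−1} (cx)^{2^i} (cx)^{2^j} ∈ F`. -/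
def sigma (n : ℕ) (c x : GaloisField 2 n) : GaloisField 2 n :=
  ∑ p ∈ (Finset.range n ×ˢ Finset.range n).filter (fun p => p.1 < p.2),
    (c * x) ^ (2 ^ p.1) * (c * x) ^ (2 ^ p.2)

/-- Lift of an element of `{0,1} ⊆ F` to the integer `0` or `1`. -/
def lift01 {n : ℕ} (a : GaloisField 2 n) : ℕ :=
  letI := Classical.decEq (GaloisField 2 n)
  if a = 1 then 1 else 0

/-- The unitary transform
`V_g^c(u) = Σ_{x ∈ F} (−1)^{g(x) + σ(c,x) + Tr(ux)} · i^{Tr(cx)}`. -/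
def V (n : ℕ) (g : GaloisField 2 n → ZMod 2) (c u : GaloisField 2 n) : ℂ :=
  ∑ x : GaloisField 2 n,
    (-1 : ℂ) ^ ((g x).val + lift01 (sigma n c x) + (Tr n (u * x)).val) *
      Complex.I ^ (Tr n (c * x)).val

/-- `g : F → F_2` is `c`-bent₄ if `V_g^c` has a flat spectrum. -/
def IsCBent4 (n : ℕ) (g : GaloisField 2 n → ZMod 2) (c : GaloisField 2 n) : Prop :=
  ∀ u : GaloisField 2 n, ‖V n g c u‖ = (2 : ℝ) ^ ((n : ℝ) / 2)

section PairSum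

variable {R : Type*} [CommRing R]

def pairSum (f : ℕ → R) (N : ℕ) : R :=
  ∑ j ∈ range N, ∑ i ∈ range j, f i * f j

theorem sum_filter_fst_lt_snd_range {M : Type*} [AddCommMonoid M] (N : ℕ)
    (h : ℕ → ℕ → M) :
    ∑ p ∈ (range N ×ˢ range N).filter (fun p => p.1 < p.2), h p.1 p.2 =
      ∑ j ∈ range N, ∑ i ∈ range j, h i j := by
  rw [sum_filter, sum_product_right]
  refine sum_congr rfl fun j hj => ?_
  rw [← sum_filter]
  congr 1
  ext i
  simp only [mem_filter, mem_range] at hj ⊢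
  omega

theorem pairSum_succ (f : ℕ → R) (N : ℕ) :
    pairSum f (N + 1) = pairSum f N + (∑ i ∈ range N, f i) * f N := by
  rw [pairSum, sum_range_succ, sum_mul, pairSum]

theorem pairSum_add (f g : ℕ → R) (N : ℕ) :
    pairSum (f + g) N = pairSum f N + pairSum g N
      + (∑ i ∈ range N, f i) * (∑ i ∈ range N, g i) - ∑ i ∈ range N, f i * g i := by
  induction N with
  | zero => simp [pairSum]
  | succ N ih =>
    simp only [pairSum_succ, ih, sum_range_succ, Pi.add_apply, sum_add_distrib]
    ring

theorem pairSum_shift (f : ℕ → R) {N : ℕ} (h : f N = f 0) :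
    pairSum (fun i => f (i + 1)) N = pairSum f N := by
  have hinner : ∀ j, ∑ i ∈ range (j + 1), f i * f (j + 1) =
      ∑ i ∈ range j, f (i + 1) * f (j + 1) + f 0 * f (j + 1) := fun j => sum_range_succ' _ _
  have hshift : pairSum f (N + 1) = pairSum (fun i => f (i + 1)) N
      + f 0 * ∑ j ∈ range N, f (j + 1) := by
    simp only [pairSum, sum_range_succ' _ N, range_zero, sum_empty, add_zero, hinner,
      sum_add_distrib, mul_sum]
  have htel := (sum_range_succ f N).symm.trans (sum_range_succ' f N)
  linear_combination -(pairSum_succ f N).symm.trans hshift + f N * htel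
    + (∑ j ∈ range N, f (j + 1) - f N) * h

theorem map_pairSum {S : Type*} [CommRing S] (φ : R →+* S) (f : ℕ → R) (N : ℕ) :
    φ (pairSum f N) = pairSum (fun i => φ (f i)) N := by
  simp only [pairSum, map_sum, map_mul]

end PairSum

open Polynomial in
theorem GaloisField.finrank_zero (p : ℕ) [Fact p.Prime] :
    Module.finrank (ZMod p) (GaloisField p 0) = 1 := by
  have : IsSplittingField (ZMod p) (GaloisField p 0) (X ^ p ^ 0 - X) :=
    IsSplittingField.splittingField _
  rw [← Subalgebra.bot_eq_top_iff_finrank_eq_one,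
    ← IsSplittingField.adjoin_rootSet (GaloisField p 0) (X ^ p ^ 0 - X : (ZMod p)[X])]
  simp

section Frobenius

variable {n : ℕ}

theorem algebraMap_Tr (a : GaloisField 2 n) :
    algebraMap (ZMod 2) (GaloisField 2 n) (Tr n a) =
      ∑ i ∈ range (Module.finrank (ZMod 2) (GaloisField 2 n)), a ^ 2 ^ i := by
  rw [Tr, FiniteField.algebraMap_trace_eq_sum_pow, Nat.card_zmod]

theorem Tr_add (a b : GaloisField 2 n) : Tr n (a + b) = Tr n a + Tr n b :=
  map_add _ a b

theorem pow_two_pow_finrank (a : GaloisField 2 n) :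
    a ^ 2 ^ Module.finrank (ZMod 2) (GaloisField 2 n) = a := by
  rw [FiniteField.pow_finrank_eq_card, FiniteField.pow_card]

/- Indexing by the degree rather than by `n` also covers `n = 0`: then the degree is `1`,
and both sums are empty. -/
theorem sigma_eq_pairSum (c x : GaloisField 2 n) :
    sigma n c x =
      pairSum (fun i => (c * x) ^ 2 ^ i) (Module.finrank (ZMod 2) (GaloisField 2 n)) := by
  rw [sigma, sum_filter_fst_lt_snd_range n (fun i j => (c * x) ^ 2 ^ i * (c * x) ^ 2 ^ j)]
  rcases eq_or_ne n 0 with rfl | hn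
  · simp [GaloisField.finrank_zero, pairSum]
  · rw [GaloisField.finrank 2 hn]
    rfl

theorem sigma_sq (c x : GaloisField 2 n) : sigma n c x ^ 2 = sigma n c x := by
  have hfrob := map_pairSum (frobenius (GaloisField 2 n) 2) (fun i => (c * x) ^ 2 ^ i)
    (Module.finrank (ZMod 2) (GaloisField 2 n))
  simp only [frobenius_def, ← pow_mul, ← pow_succ] at hfrob
  rw [sigma_eq_pairSum, hfrob]
  refine pairSum_shift (fun i => (c * x) ^ 2 ^ i) ?_
  rw [pow_two_pow_finrank, pow_zero, pow_one]

theorem sigma_polarization (c x z : GaloisField 2 n) :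
    sigma n c (x + z) + sigma n c x + sigma n c z =
      algebraMap (ZMod 2) (GaloisField 2 n)
        (Tr n (c * x) * Tr n (c * z) + Tr n (c ^ 2 * x * z)) := by
  have hfrob : (fun i => (c * (x + z)) ^ 2 ^ i) =
      (fun i => (c * x) ^ 2 ^ i) + (fun i => (c * z) ^ 2 ^ i) := by
    funext i
    rw [mul_add, add_pow_char_pow, Pi.add_apply]
  have hdiag : ∀ i, (c * x) ^ 2 ^ i * (c * z) ^ 2 ^ i = (c ^ 2 * x * z) ^ 2 ^ i := fun i => by
    rw [← mul_pow]
    ring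
  simp only [sigma_eq_pairSum, hfrob, pairSum_add, map_add, map_mul, algebraMap_Tr, hdiag]
  set N := Module.finrank (ZMod 2) (GaloisField 2 n)
  linear_combination (pairSum (fun i => (c * x) ^ 2 ^ i) N + pairSum (fun i => (c * z) ^ 2 ^ i) N
    - ∑ i ∈ range N, (c ^ 2 * x * z) ^ 2 ^ i) * CharTwo.two_eq_zero (R := GaloisField 2 n)

theorem natCast_lift01 {a : GaloisField 2 n} (ha : a ^ 2 = a) :
    ((lift01 a : ℕ) : GaloisField 2 n) = a := by
  unfold lift01
  split_ifs with h
  · rw [h, Nat.cast_one]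
  · have hidem : IsIdempotentElem a := by rw [IsIdempotentElem, ← sq, ha]
    rw [Nat.cast_zero, (IsIdempotentElem.iff_eq_zero_or_one.mp hidem).resolve_right h]

theorem lift01_sigma_polarization (c x z : GaloisField 2 n) :
    ((lift01 (sigma n c (x + z)) + lift01 (sigma n c x) + lift01 (sigma n c z) : ℕ) : ZMod 2) =
      Tr n (c * x) * Tr n (c * z) + Tr n (c ^ 2 * x * z) := by
  apply (algebraMap (ZMod 2) (GaloisField 2 n)).injective
  rw [← sigma_polarization, map_natCast]
  push_cast
  rw [natCast_lift01 (sigma_sq c (x + z)), natCast_lift01 (sigma_sq c x),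
    natCast_lift01 (sigma_sq c z)]

end Frobenius

theorem neg_one_pow_eq_of_natCast_eq {R : Type*} [Ring R] {a b : ℕ}
    (h : (a : ZMod 2) = b) : (-1 : R) ^ a = (-1) ^ b := by
  rw [neg_one_pow_eq_pow_mod_two, (ZMod.natCast_eq_natCast_iff' a b 2).mp h,
    ← neg_one_pow_eq_pow_mod_two]

theorem I_pow_val_add_mul_conj (A B : ZMod 2) :
    Complex.I ^ (A + B).val * starRingEnd ℂ (Complex.I ^ A.val) =
      (-1) ^ (A.val * B.val) * Complex.I ^ B.val := by
  obtain rfl | rfl : A = 0 ∨ A = 1 := by decide +revert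
  all_goals obtain rfl | rfl : B = 0 ∨ B = 1 := by decide +revert
  all_goals simp [show (1 + 1 : ZMod 2) = 0 from rfl, ZMod.val_one]

def vSummand (n : ℕ) (g : GaloisField 2 n → ZMod 2) (c u x : GaloisField 2 n) : ℂ :=
  (-1 : ℂ) ^ ((g x).val + lift01 (sigma n c x) + (Tr n (u * x)).val) *
    Complex.I ^ (Tr n (c * x)).val

theorem vSummand_add_mul_conj {n : ℕ} (g : GaloisField 2 n → ZMod 2)
    (c u x z : GaloisField 2 n) :
    vSummand n g c u (x + z) * starRingEnd ℂ (vSummand n g c u x) =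
      (-1 : ℂ) ^ ((Tr n (u * z)).val + lift01 (sigma n c z)) * Complex.I ^ (Tr n (c * z)).val *
        (-1 : ℂ) ^ ((g x).val + (g (x + z)).val + (Tr n (c ^ 2 * x * z)).val) := by
  have hsigma := lift01_sigma_polarization c x z
  push_cast at hsigma
  rw [vSummand, vSummand, mul_add, mul_add, Tr_add, Tr_add, map_mul, map_pow, map_neg, map_one,
    mul_mul_mul_comm, I_pow_val_add_mul_conj, ← mul_assoc, ← pow_add, ← pow_add,
    mul_right_comm _ (Complex.I ^ _), ← pow_add]
  congr 1
  apply neg_one_pow_eq_of_natCast_eq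
  push_cast [ZMod.natCast_val, ZMod.cast_id', id]
  have two : (2 : ZMod 2) = 0 := rfl
  linear_combination hsigma
    + (Tr n (u * x) + Tr n (c * x) * Tr n (c * z) - (lift01 (sigma n c z) : ZMod 2)) * two

/-- `V_g^c(u)·conj(V_g^c(u)) = Σ_z (−1)^{Tr(uz)+σ(c,z)} i^{Tr(cz)} · Σ_x (−1)^{g(x)+g(x+z)+Tr(c²xz)}`. -/
theorem V_mul_conj (n : ℕ) (g : GaloisField 2 n → ZMod 2) (c u : GaloisField 2 n) :
    V n g c u * starRingEnd ℂ (V n g c u) =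
      ∑ z : GaloisField 2 n,
        (-1 : ℂ) ^ ((Tr n (u * z)).val + lift01 (sigma n c z)) *
          Complex.I ^ (Tr n (c * z)).val *
          (∑ x : GaloisField 2 n,
            (-1 : ℂ) ^ ((g x).val + (g (x + z)).val + (Tr n (c ^ 2 * x * z)).val)) := by
  calc V n g c u * starRingEnd ℂ (V n g c u)
      = ∑ x, ∑ z, vSummand n g c u (x + z) * starRingEnd ℂ (vSummand n g c u x) := by
        rw [V, map_sum, sum_mul_sum, sum_comm]
        exact sum_congr rfl fun x _ => (Fintype.sum_equiv (Equiv.addLeft x) _ _ fun _ => rfl).symm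
    _ = _ := by
      rw [sum_comm]
      simp only [vSummand_add_mul_conj, mul_sum]
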